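/- Disjoint copies break negated-role existentials: let Δ = {a} be a one-element type with R the total relation on Δ and A = Δ. Then the concept ¬∃(¬R).A (no ¬R-successor in A) holds at the unique point of Δ, but in the disjoint union Δ ⊕ Δ (with R' relating inl a to inl a and inr a to inr a only, and A' the whole domain), the concept ¬∃(¬R').A' fails at every point. -/
import Mathlib


theorem stmt_17 (R : PUnit → PUnit → Prop) (hR : ∀ a b, R a b)
    (R' : PUnit ⊕ PUnit → PUnit ⊕ PUnit → Prop)
    (hR' : ∀ a b : PUnit ⊕ PUnit, R' a b ↔
      (∃ u v : PUnit, R u v ∧ ((a = Sum.inl u ∧ b = Sum.inl v) ∨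
                                (a = Sum.inr u ∧ b = Sum.inr v)))) :
    (∀ a : PUnit, ¬ ∃ v : PUnit, ¬ R a v ∧ v ∈ (Set.univ : Set PUnit)) ∧
    (∀ p : PUnit ⊕ PUnit,
      ¬ ¬ ∃ v : PUnit ⊕ PUnit, ¬ R' p v ∧ v ∈ (Set.univ : Set (PUnit ⊕ PUnit))) := by
  refine ⟨fun a ⟨v, hv, _⟩ => hv (hR a v), fun p h => h ?_⟩
  rcases p with a | a
  · exact ⟨Sum.inr PUnit.unit, fun h' => by rcases (hR' _ _).1 h' with ⟨u, v, _, ⟨_, hb⟩ | ⟨ha, _⟩⟩ <;> simp_all, trivial⟩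
  · exact ⟨Sum.inl PUnit.unit, fun h' => by rcases (hR' _ _).1 h' with ⟨u, v, _, ⟨ha, _⟩ | ⟨_, hb⟩⟩ <;> simp_all, trivial⟩
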